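/- arXiv:2212.02101 — 3 statements merged into one kernel-verified Lean document; each statement's English description precedes it below -/
import Mathlib

section
/- Under the heteroskedastic model Y = m(X) + ε·ζ(X_{S*}), if j ∉ S* and X̃ⱼ is a coordinate-wise knockoff of Xⱼ, then the pairs (ε·ζ(X_{S*}), Xⱼ) and (ε·ζ(X_{S*}), X̃ⱼ) have the same distribution. -/
/-!
Write `W = (X, X̃ⱼ)`. Since `j ∉ S*`, both pairs `(X_{S*}, Xⱼ)` and `(X_{S*}, X̃ⱼ)` are measurable
functions of `W`, and the second is the first evaluated at `X` with its `j`-th coordinate replaced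
by `X̃ⱼ`; the knockoff property therefore gives them the same law. As `ε` is independent of `W`,
the joint laws of `ε` with either pair are the same product measure, and `(ε·ζ(X_{S*}), ·)` is a
measurable function of those joints.
-/

open MeasureTheory ProbabilityTheory

theorem ProbabilityTheory.IndepFun.map_prodMk_eq_of_map_eq
    {Ω α β : Type*} [MeasurableSpace Ω] [MeasurableSpace α] [MeasurableSpace β]
    {μ : Measure Ω} [IsFiniteMeasure μ] {ε : Ω → α} {T T' : Ω → β}
    (h : IndepFun ε T μ) (h' : IndepFun ε T' μ) (hε : AEMeasurable ε μ)
    (hT : AEMeasurable T μ) (hT' : AEMeasurable T' μ) (hlaw : μ.map T = μ.map T') :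
    μ.map (fun ω => (ε ω, T ω)) = μ.map (fun ω => (ε ω, T' ω)) := by
  rw [h.map_prod_eq_prod_map_map hε hT, h'.map_prod_eq_prod_map_map hε hT', hlaw]

theorem map_comp_prodMk_eval_eq_of_map_update_eq
    {Ω ι κ β : Type*} [MeasurableSpace Ω] [MeasurableSpace β] [DecidableEq ι] {μ : Measure Ω}
    {j : ι} {r : κ → ι} (hr : ∀ k, r k ≠ j) {X : Ω → ι → β} {Xkj : Ω → β} (hX : Measurable X)
    (hXkj : Measurable Xkj)
    (hlaw : μ.map (fun ω => Function.update (X ω) j (Xkj ω)) = μ.map X) :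
    μ.map (fun ω => (X ω ∘ r, X ω j)) = μ.map (fun ω => (X ω ∘ r, Xkj ω)) := by
  set g : (ι → β) → (κ → β) × β := fun v => (v ∘ r, v j)
  have hg : Measurable g :=
    (measurable_pi_lambda _ fun k => measurable_pi_apply (r k)).prodMk (measurable_pi_apply j)
  have hupdate : Measurable fun ω => Function.update (X ω) j (Xkj ω) :=
    measurable_update'.comp (hX.prodMk hXkj)
  have hg_update : (fun ω => (X ω ∘ r, Xkj ω)) =
      g ∘ fun ω => Function.update (X ω) j (Xkj ω) := by
    funext ω
    simp only [g, Function.comp_apply, Function.update_self,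
      Function.update_comp_eq_of_forall_ne _ _ hr]
  rw [hg_update, ← Measure.map_map hg hupdate, hlaw, Measure.map_map hg hX]
  rfl

theorem exchangeability_null_feature_general
    {Ω : Type} [MeasurableSpace Ω]
    (μ : Measure Ω) [IsProbabilityMeasure μ] {p : ℕ}
    (X : Ω → (Fin p → ℝ)) (Xkj : Ω → ℝ) (ε : Ω → ℝ)
    (S : Finset (Fin p)) (j : Fin p) (hj : j ∉ S)
    (ζ : ({ i : Fin p // i ∈ S } → ℝ) → ℝ)
    (hX : Measurable X) (hXkj : Measurable Xkj) (hε : Measurable ε)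
    (hζ : Measurable ζ)
    (hεindep : IndepFun ε (fun ω => (X ω, Xkj ω)) μ)
    (hlaw : μ.map (fun ω => Function.update (X ω) j (Xkj ω)) = μ.map X) :
    μ.map (fun ω => (ε ω * ζ (fun i => X ω i.1), X ω j)) =
      μ.map (fun ω => (ε ω * ζ (fun i => X ω i.1), Xkj ω)) := by
  have hcomp : Measurable fun v : Fin p → ℝ => v ∘ Subtype.val (p := (· ∈ S)) :=
    measurable_pi_lambda _ fun i => measurable_pi_apply i.1
  have hXS : Measurable fun ω => X ω ∘ Subtype.val (p := (· ∈ S)) := hcomp.comp hX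
  have hindep_Xj : IndepFun ε (fun ω => (X ω ∘ Subtype.val, X ω j)) μ :=
    hεindep.comp (ψ := fun q : (Fin p → ℝ) × ℝ => (q.1 ∘ Subtype.val, q.1 j)) measurable_id <|
      (hcomp.comp measurable_fst).prodMk measurable_fst.eval
  have hindep_Xkj : IndepFun ε (fun ω => (X ω ∘ Subtype.val, Xkj ω)) μ :=
    hεindep.comp (ψ := fun q : (Fin p → ℝ) × ℝ => (q.1 ∘ Subtype.val, q.2)) measurable_id <|
      (hcomp.comp measurable_fst).prodMk measurable_snd
  have hjoint := hindep_Xj.map_prodMk_eq_of_map_eq hindep_Xkj hε.aemeasurable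
    (hXS.prodMk hX.eval).aemeasurable (hXS.prodMk hXkj).aemeasurable
    (map_comp_prodMk_eval_eq_of_map_update_eq (fun i => ne_of_mem_of_not_mem i.2 hj) hX hXkj hlaw)
  set φ : ℝ × (({ i : Fin p // i ∈ S } → ℝ) × ℝ) → ℝ × ℝ := fun q => (q.1 * ζ q.2.1, q.2.2)
  have hφ : Measurable φ :=
    (measurable_fst.mul (hζ.comp (measurable_fst.comp measurable_snd))).prodMk
      (measurable_snd.comp measurable_snd)
  calc μ.map (fun ω => (ε ω * ζ (fun i => X ω i.1), X ω j))
      = (μ.map fun ω => (ε ω, X ω ∘ Subtype.val, X ω j)).map φ := by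
        rw [Measure.map_map hφ (hε.prodMk (hXS.prodMk hX.eval))]; rfl
    _ = (μ.map fun ω => (ε ω, X ω ∘ Subtype.val, Xkj ω)).map φ := by rw [hjoint]
    _ = μ.map (fun ω => (ε ω * ζ (fun i => X ω i.1), Xkj ω)) := by
        rw [Measure.map_map hφ (hε.prodMk (hXS.prodMk hXkj))]; rfl

/-- under the heteroskedastic model, if `j ∉ S*` and `X̃ⱼ` is a
coordinate-wise knockoff of `Xⱼ`, then `(ε·ζ(X_{S*}), Xⱼ)` and `(ε·ζ(X_{S*}), X̃ⱼ)`
have the same distribution. -/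
theorem exchangeability_null_feature
    {Ω : Type} [MeasurableSpace Ω] [StandardBorelSpace Ω] [Nonempty Ω]
    (μ : Measure Ω) [IsProbabilityMeasure μ] {p : ℕ}
    (X : Ω → (Fin p → ℝ)) (Xkj : Ω → ℝ) (ε Y : Ω → ℝ)
    (S : Finset (Fin p)) (j : Fin p) (hj : j ∉ S)
    (ζ : ({ i : Fin p // i ∈ S } → ℝ) → ℝ) (m : (Fin p → ℝ) → ℝ)
    (hX : Measurable X) (hXkj : Measurable Xkj) (hε : Measurable ε)
    (hζ : Measurable ζ) (hm : Measurable m)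
    (hζpos : ∀ z, 0 < ζ z)
    (hεindep : IndepFun ε (fun ω => (X ω, Xkj ω)) μ)
    (hεmean : ∫ ω, ε ω ∂μ = 0) (hεvar : ∫ ω, (ε ω) ^ 2 ∂μ = 1)
    (hY : Y = fun ω => m (X ω) + ε ω * ζ (fun i => X ω i.1))
    (hlaw : μ.map (fun ω => Function.update (X ω) j (Xkj ω)) = μ.map X)
    (hci : CondIndepFun (MeasurableSpace.comap X inferInstance) hX.comap_le Xkj Y μ) :
    μ.map (fun ω => (ε ω * ζ (fun i => X ω i.1), X ω j)) =
      μ.map (fun ω => (ε ω * ζ (fun i => X ω i.1), Xkj ω)) :=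
  exchangeability_null_feature_general μ X Xkj ε S j hj ζ hX hXkj hε hζ hεindep hlaw
end

section
/- Let c > 0, a ∈ ℝ, inf ζ > 0, sup ζ < ∞, E[ε⁴] < ∞, and assume P({Xⱼ ≤ a} ∩ {X̃ⱼ ≤ a}) ≥ c and P({Xⱼ ≤ a} ∩ {X̃ⱼ > a}) ≥ c for every j ∈ {1,...,p}. Then with μⱼ(a) = E[(𝟙{Xⱼ≤a} − 𝟙{X̃ⱼ≤a})(ζ(X_{S*})ε)²] and σⱼ²(a) = E[((ζ(X_{S*})ε)²(𝟙{Xⱼ≤a} − 𝟙{X̃ⱼ≤a}) − μⱼ(a))²], one has min_{1≤j≤p} σⱼ²(a) ≥ min{ (c/2)·(inf ζ)⁴·E[ε⁴], c³·(inf ζ)⁸·(E[ε⁴])² / (16·(sup ζ)⁴·(E[ε²])²) } > 0. -/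
/-!
Write `Y = (ζ ε)² D` with `D = 𝟙{Xⱼ ≤ a} − 𝟙{X̃ⱼ ≤ a}` and `m = E Y`.
On `B = {Xⱼ ≤ a < X̃ⱼ}` we have `D = 1`, so independence of `ε` and `(X, X̃)` gives
`E Y² ≥ c ζ₀⁴ E ε⁴`; on `C = {Xⱼ ≤ a, X̃ⱼ ≤ a}` we have `Y = 0`, so `Var Y ≥ c m²`.
If `m² ≤ c ζ₀⁴ E ε⁴ / 2`, then `Var Y = E Y² − m²` gives the first bound; otherwise
`Var Y ≥ c m²` together with `m² ≤ ζ₁⁴ (E ε²)²` gives the second.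
-/

open MeasureTheory ProbabilityTheory

lemma min_le_of_le_add_sq_of_mul_sq_le {c A K m V : ℝ} (hc : 0 ≤ c) (hA : 0 ≤ A)
    (hAV : A ≤ V + m ^ 2) (hmV : c * m ^ 2 ≤ V) (hmK : m ^ 2 ≤ K) :
    min (A / 2) (c * A ^ 2 / (16 * K)) ≤ V := by
  by_cases hm : m ^ 2 ≤ A / 2
  · exact (min_le_left _ _).trans (by linarith)
  refine (min_le_right _ _).trans ?_
  have hK : 0 < K := by linarith
  have hVA : c * A / 2 ≤ V := by nlinarith
  rw [div_le_iff₀ (by positivity)]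
  nlinarith [mul_le_mul_of_nonneg_left (show A ≤ 2 * K by linarith) (mul_nonneg hc hA)]

section

variable {Ω β : Type*} [MeasurableSpace Ω] [MeasurableSpace β] {μ : Measure Ω}

lemma integral_pow_four_pos_of_integral_sq_pos {e : Ω → ℝ}
    (he4 : Integrable (fun ω => e ω ^ 4) μ) (he2 : 0 < ∫ ω, e ω ^ 2 ∂μ) :
    0 < ∫ ω, e ω ^ 4 ∂μ := by
  refine (integral_nonneg fun ω => by positivity).lt_of_ne fun h => he2.ne' ?_
  have he4_zero := (integral_eq_zero_iff_of_nonneg (fun ω => by positivity) he4).1 h.symm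
  refine integral_eq_zero_of_ae ?_
  filter_upwards [he4_zero] with ω hω
  simpa using hω

lemma memLp_two_sq_of_integrable_pow_four {e : Ω → ℝ} (he : AEStronglyMeasurable e μ)
    (he4 : Integrable (fun ω => e ω ^ 4) μ) : MemLp (fun ω => e ω ^ 2) 2 μ :=
  (memLp_two_iff_integrable_sq (f := fun ω => e ω ^ 2) (he.pow 2)).2
    (by simpa only [← pow_mul] using he4)

lemma ProbabilityTheory.IndepFun.setIntegral_preimage [IsFiniteMeasure μ] {f : Ω → ℝ}
    {g : Ω → β} (hfg : IndepFun f g μ) (hf : AEStronglyMeasurable f μ) (hg : Measurable g)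
    {S : Set β} (hS : MeasurableSet S) :
    ∫ ω in g ⁻¹' S, f ω ∂μ = (∫ ω, f ω ∂μ) * μ.real (g ⁻¹' S) := by
  have hind : IndepFun f ((g ⁻¹' S).indicator (1 : Ω → ℝ)) μ :=
    hfg.comp measurable_id (measurable_one.indicator hS)
  rw [← integral_indicator (hg hS), ← integral_indicator_one (hg hS),
    ← hind.integral_fun_mul_eq_mul_integral hf
      (measurable_one.indicator (hg hS)).aestronglyMeasurable]
  congr 1 with ω
  by_cases hω : ω ∈ g ⁻¹' S <;> simp [hω]

lemma measureReal_mul_sq_integral_le_variance [IsFiniteMeasure μ] {Y : Ω → ℝ}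
    (hY : MemLp Y 2 μ) {C : Set Ω} (hC : MeasurableSet C) (hYC : ∀ ω ∈ C, Y ω = 0) :
    μ.real C * (∫ ω, Y ω ∂μ) ^ 2 ≤ variance Y μ := by
  rw [variance_eq_integral hY.aemeasurable]
  calc μ.real C * (∫ ω, Y ω ∂μ) ^ 2 = ∫ ω in C, (Y ω - ∫ ω, Y ω ∂μ) ^ 2 ∂μ := by
        rw [setIntegral_congr_fun (g := fun _ => (∫ ω, Y ω ∂μ) ^ 2) hC
          fun ω hω => by simp [hYC ω hω], setIntegral_const, smul_eq_mul]
    _ ≤ _ := setIntegral_le_integral (hY.sub (memLp_const _)).integrable_sq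
        (Filter.Eventually.of_forall fun ω => sq_nonneg _)

lemma min_le_variance_of_noise_bounds [IsProbabilityMeasure μ] {e Y : Ω → ℝ} {g : Ω → β}
    {S : Set β} {C : Set Ω} {ζ₀ ζ₁ c : ℝ} (he : Measurable e) (hY : AEStronglyMeasurable Y μ)
    (hg : Measurable g) (hS : MeasurableSet S) (hC : MeasurableSet C) (hindep : IndepFun e g μ)
    (he4 : Integrable (fun ω => e ω ^ 4) μ) (hc : 0 ≤ c)
    (hY_le : ∀ ω, |Y ω| ≤ ζ₁ ^ 2 * e ω ^ 2)
    (hY_ge : ∀ ω ∈ g ⁻¹' S, ζ₀ ^ 4 * e ω ^ 4 ≤ Y ω ^ 2)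
    (hYC : ∀ ω ∈ C, Y ω = 0) (hcS : c ≤ μ.real (g ⁻¹' S)) (hcC : c ≤ μ.real C) :
    min (c / 2 * ζ₀ ^ 4 * ∫ ω, e ω ^ 4 ∂μ)
        (c ^ 3 * ζ₀ ^ 8 * (∫ ω, e ω ^ 4 ∂μ) ^ 2 / (16 * ζ₁ ^ 4 * (∫ ω, e ω ^ 2 ∂μ) ^ 2))
      ≤ variance Y μ := by
  set I₄ := ∫ ω, e ω ^ 4 ∂μ
  set I₂ := ∫ ω, e ω ^ 2 ∂μ
  have he2 := memLp_two_sq_of_integrable_pow_four he.aestronglyMeasurable he4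
  have hYL2 : MemLp Y 2 μ := (he2.const_mul (ζ₁ ^ 2)).of_le hY
    (Filter.Eventually.of_forall fun ω => (hY_le ω).trans (le_abs_self _))
  have hI₄ : 0 ≤ I₄ := integral_nonneg fun ω => by positivity
  have hsecond_moment : c * ζ₀ ^ 4 * I₄ ≤ ∫ ω, Y ω ^ 2 ∂μ :=
    calc c * ζ₀ ^ 4 * I₄ ≤ μ.real (g ⁻¹' S) * ζ₀ ^ 4 * I₄ := by gcongr
      _ = ∫ ω in g ⁻¹' S, ζ₀ ^ 4 * e ω ^ 4 ∂μ := by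
        have hindep₄ : IndepFun (fun ω => e ω ^ 4) g μ :=
          hindep.comp (measurable_id.pow_const 4) measurable_id
        rw [integral_const_mul,
          hindep₄.setIntegral_preimage (he.pow_const 4).aestronglyMeasurable hg hS]
        ring
      _ ≤ ∫ ω in g ⁻¹' S, Y ω ^ 2 ∂μ :=
        setIntegral_mono_on (he4.const_mul _).integrableOn hYL2.integrable_sq.integrableOn
          (hg hS) hY_ge
      _ ≤ ∫ ω, Y ω ^ 2 ∂μ := setIntegral_le_integral hYL2.integrable_sq
        (Filter.Eventually.of_forall fun ω => sq_nonneg _)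
  have hmean : |∫ ω, Y ω ∂μ| ≤ ζ₁ ^ 2 * I₂ := by
    rw [← integral_const_mul]
    exact norm_integral_le_of_norm_le ((he2.integrable one_le_two).const_mul _)
      (Filter.Eventually.of_forall fun ω => (Real.norm_eq_abs _).trans_le (hY_le ω))
  calc _ = min (c * ζ₀ ^ 4 * I₄ / 2) (c * (c * ζ₀ ^ 4 * I₄) ^ 2 / (16 * (ζ₁ ^ 4 * I₂ ^ 2))) := by
        congr 1 <;> ring
    _ ≤ _ := min_le_of_le_add_sq_of_mul_sq_le hc (by positivity)
        (by rw [variance_eq_sub hYL2]; simpa using hsecond_moment)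
        ((mul_le_mul_of_nonneg_right hcC (sq_nonneg _)).trans
          (measureReal_mul_sq_integral_le_variance hYL2 hC hYC))
        (by simpa [sq_abs, mul_pow, ← pow_mul] using pow_le_pow_left₀ (abs_nonneg _) hmean 2)

lemma min_le_integral_sq_sub_of_weight_bounds [IsProbabilityMeasure μ] {e Z D : Ω → ℝ}
    {g : Ω → β} {S : Set β} {C : Set Ω} {ζ₀ ζ₁ c : ℝ} (he : Measurable e) (hZ : Measurable Z)
    (hD : Measurable D) (hg : Measurable g) (hS : MeasurableSet S) (hC : MeasurableSet C)
    (hindep : IndepFun e g μ) (he4 : Integrable (fun ω => e ω ^ 4) μ) (hζ₀ : 0 ≤ ζ₀)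
    (hc : 0 ≤ c) (hZ₀ : ∀ ω, ζ₀ ≤ Z ω) (hZ₁ : ∀ ω, Z ω ≤ ζ₁) (hD_abs : ∀ ω, |D ω| ≤ 1)
    (hDS : ∀ ω ∈ g ⁻¹' S, D ω = 1) (hDC : ∀ ω ∈ C, D ω = 0) (hcS : c ≤ μ.real (g ⁻¹' S))
    (hcC : c ≤ μ.real C) :
    min (c / 2 * ζ₀ ^ 4 * ∫ ω, e ω ^ 4 ∂μ)
        (c ^ 3 * ζ₀ ^ 8 * (∫ ω, e ω ^ 4 ∂μ) ^ 2 / (16 * ζ₁ ^ 4 * (∫ ω, e ω ^ 2 ∂μ) ^ 2))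
      ≤ ∫ ω, ((Z ω * e ω) ^ 2 * D ω - ∫ ω', D ω' * (Z ω' * e ω') ^ 2 ∂μ) ^ 2 ∂μ := by
  have hY : Measurable fun ω => (Z ω * e ω) ^ 2 * D ω := by fun_prop
  simp_rw [mul_comm (D _), ← variance_eq_integral hY.aemeasurable]
  refine min_le_variance_of_noise_bounds he hY.aestronglyMeasurable hg hS hC hindep he4 hc
    (fun ω => ?_) (fun ω hω => ?_) (fun ω hω => by simp [hDC ω hω]) hcS hcC
  · have hZ_nonneg : 0 ≤ Z ω := hζ₀.trans (hZ₀ ω)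
    rw [abs_mul, abs_sq, mul_pow]
    calc Z ω ^ 2 * e ω ^ 2 * |D ω| ≤ Z ω ^ 2 * e ω ^ 2 :=
          mul_le_of_le_one_right (by positivity) (hD_abs ω)
      _ ≤ ζ₁ ^ 2 * e ω ^ 2 := by gcongr; exact hZ₁ ω
  · rw [hDS ω hω, mul_one, ← pow_mul, mul_pow]
    gcongr
    exact hZ₀ ω

end

/-- uniform lower bound for the variances `σⱼ²(a)` over `j ∈ {1,…,p}`. -/
theorem uniform_variance_lower_bound
    {Ω : Type} [MeasurableSpace Ω] (μ : Measure Ω) [IsProbabilityMeasure μ] {p : ℕ}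
    (X Xk : Ω → Fin p → ℝ) (ε : Ω → ℝ)
    (S : Finset (Fin p))
    (ζ : ({ i : Fin p // i ∈ S } → ℝ) → ℝ)
    (hX : Measurable X) (hXk : Measurable Xk) (hε : Measurable ε) (hζ : Measurable ζ)
    (ζ₀ ζ₁ : ℝ) (hζ₀ : 0 < ζ₀) (hζlb : ∀ z, ζ₀ ≤ ζ z) (hζub : ∀ z, ζ z ≤ ζ₁)
    (hεindep : IndepFun ε (fun ω => (X ω, Xk ω)) μ)
    (hε4 : Integrable (fun ω => (ε ω) ^ 4) μ)
    (hε2pos : 0 < ∫ ω, (ε ω) ^ 2 ∂μ)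
    (a c : ℝ) (hc : 0 < c)
    (hprob1 : ∀ j : Fin p, ENNReal.ofReal c ≤ μ {ω | X ω j ≤ a ∧ Xk ω j ≤ a})
    (hprob2 : ∀ j : Fin p, ENNReal.ofReal c ≤ μ {ω | X ω j ≤ a ∧ a < Xk ω j}) :
    ∀ j : Fin p,
      min (c / 2 * ζ₀ ^ 4 * ∫ ω, (ε ω) ^ 4 ∂μ)
          (c ^ 3 * ζ₀ ^ 8 * (∫ ω, (ε ω) ^ 4 ∂μ) ^ 2
            / (16 * ζ₁ ^ 4 * (∫ ω, (ε ω) ^ 2 ∂μ) ^ 2))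
        ≤ ∫ ω, ((ζ (fun i => X ω i.1) * ε ω) ^ 2 *
              ((if X ω j ≤ a then (1 : ℝ) else 0) - (if Xk ω j ≤ a then (1 : ℝ) else 0))
            - ∫ ω', ((if X ω' j ≤ a then (1 : ℝ) else 0)
                      - (if Xk ω' j ≤ a then (1 : ℝ) else 0))
                * (ζ (fun i => X ω' i.1) * ε ω') ^ 2 ∂μ) ^ 2 ∂μ
      ∧ 0 < min (c / 2 * ζ₀ ^ 4 * ∫ ω, (ε ω) ^ 4 ∂μ)
          (c ^ 3 * ζ₀ ^ 8 * (∫ ω, (ε ω) ^ 4 ∂μ) ^ 2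
            / (16 * ζ₁ ^ 4 * (∫ ω, (ε ω) ^ 2 ∂μ) ^ 2)) := by
  intro j
  have hζ₁ : 0 < ζ₁ := hζ₀.trans_le ((hζlb 0).trans (hζub 0))
  have hI₄ := integral_pow_four_pos_of_integral_sq_pos hε4 hε2pos
  refine ⟨?_, lt_min (by positivity) (by positivity)⟩
  have hXj : Measurable fun ω => X ω j := (measurable_pi_apply j).comp hX
  have hXkj : Measurable fun ω => Xk ω j := (measurable_pi_apply j).comp hXk
  have hprob (s : Set Ω) (hs : ENNReal.ofReal c ≤ μ s) : c ≤ μ.real s :=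
    (ENNReal.ofReal_le_iff_le_toReal (measure_ne_top μ s)).1 hs
  exact min_le_integral_sq_sub_of_weight_bounds (g := fun ω => (X ω, Xk ω))
    (S := {q | q.1 j ≤ a ∧ a < q.2 j}) (C := {ω | X ω j ≤ a ∧ Xk ω j ≤ a}) hε (by fun_prop)
    ((measurable_const.ite (measurableSet_le hXj measurable_const) measurable_const).sub
      (measurable_const.ite (measurableSet_le hXkj measurable_const) measurable_const))
    (hX.prodMk hXk) (by measurability) (by measurability)
    hεindep hε4 hζ₀.le hc.le (fun _ => hζlb _) (fun _ => hζub _)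
    (fun ω => by split_ifs <;> norm_num) (fun ω hω => by simp [hω.1, hω.2.not_ge])
    (fun ω hω => by simp [hω.1, hω.2]) (hprob _ (hprob2 j)) (hprob _ (hprob1 j))
end

section
/- Under the event of the previous sandwich bound, if additionally min_{l ∈ S*} max_r |μₗ(κᵣ)| > μ̲ and max_r |μₗ(κᵣ)| = 0 for l ∉ S*, then the index l̂ = argmax_l |Gₗ(âₗ)| belongs to S*, and moreover |μ_{l̂}(â_{l̂})| ≥ max_r|μ_{l̂}(κᵣ)| − (2/3)μ̲ > μ̲/3. -/
/-- the doubly maximizing index `l̂` belongs to `S*`, and the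
selected signal is bounded below. -/
theorem double_argmax_in_signal_set {p R : ℕ} (G μv : Fin p → Fin (R + 1) → ℝ)
    (S : Finset (Fin p)) (hS : S.Nonempty)
    (μb : ℝ) (hμb : 0 < μb)
    (ah : Fin p → Fin (R + 1)) (hah : ∀ l r, |G l r| ≤ |G l (ah l)|)
    (lh : Fin p) (hlh : ∀ l, |G l (ah l)| ≤ |G lh (ah lh)|)
    (hclose : ∀ l r, |G l r - μv l r| ≤ μb / 3)
    (hsig : ∀ l ∈ S, μb < Finset.univ.sup' Finset.univ_nonempty (fun r => |μv l r|))
    (hnull : ∀ l, l ∉ S → ∀ r, μv l r = 0) :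
    lh ∈ S ∧
    Finset.univ.sup' Finset.univ_nonempty (fun r => |μv lh r|) - 2 / 3 * μb
      ≤ |μv lh (ah lh)| ∧
    μb / 3 < |μv lh (ah lh)| := by
  obtain ⟨l₀, hl₀⟩ := hS
  -- there is r₀ with |μv l₀ r₀| > μb
  obtain ⟨r₀, _, hr₀⟩ := Finset.exists_mem_eq_sup' (Finset.univ_nonempty)
    (fun r => |μv l₀ r|)
  have hsup := hsig l₀ hl₀
  rw [hr₀] at hsup
  have h1 : |μv l₀ r₀| - μb / 3 ≤ |G l₀ r₀| := by
    have := hclose l₀ r₀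
    have := abs_sub_abs_le_abs_sub (μv l₀ r₀) (G l₀ r₀)
    rw [abs_sub_comm] at this
    linarith
  have h2 : 2 * μb / 3 < |G lh (ah lh)| := by
    have := hah l₀ r₀
    have := hlh l₀
    linarith
  have h3 : μb / 3 < |μv lh (ah lh)| := by
    have := hclose lh (ah lh)
    have := abs_sub_abs_le_abs_sub (G lh (ah lh)) (μv lh (ah lh))
    linarith
  have hmem : lh ∈ S := by
    by_contra h
    have := hnull lh h (ah lh)
    rw [this, abs_zero] at h3
    linarith
  refine ⟨hmem, ?_, h3⟩
  obtain ⟨r₁, _, hr₁⟩ := Finset.exists_mem_eq_sup' (Finset.univ_nonempty)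
    (fun r => |μv lh r|)
  rw [hr₁]
  have ha : |μv lh r₁| - μb / 3 ≤ |G lh r₁| := by
    have := hclose lh r₁
    have := abs_sub_abs_le_abs_sub (μv lh r₁) (G lh r₁)
    rw [abs_sub_comm] at this
    linarith
  have hb := hah lh r₁
  have hc : |G lh (ah lh)| - μb / 3 ≤ |μv lh (ah lh)| := by
    have := hclose lh (ah lh)
    have := abs_sub_abs_le_abs_sub (G lh (ah lh)) (μv lh (ah lh))
    linarith
  linarith
end
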